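/- Let $V$ be a complex vector space with a linear action $\pi$ of a group $G$, and let $H \le G$ be a finite subgroup with subgroups $U^+, M, U^- \le H$ such that $|H| = |U^+||M||U^-|$ and every $h \in H$ factors uniquely as $h = u^+ m u^-$ with $u^+ \in U^+$, $m \in M$, $u^- \in U^-$ (so $H = U^+MU^-$). Let $v \in V$ be $H$-invariant and let $a \in G$ satisfy $a^{-1}U^+a \subseteq U^+$, $a^{-1}Ma = M$, and $aU^-a^{-1} \subseteq U^-$. Then $\frac{1}{|U^+|}\sum_{u \in U^+} \pi(ua)v = \frac{1}{|H|}\sum_{h \in H} \pi(ha)v$; in particular the left-hand side is an $H$-invariant vector. -/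

import Mathlib

/-- Finite-group model of Lemma A.2.2.2: if `H = U⁺MU⁻` has an Iwahori-type
unique factorization, `v` is `H`-invariant and `a` contracts `U⁻` and expands
`U⁺` by conjugation (normalizing `M`), then averaging `π(u a) v` over `U⁺`
equals averaging `π(h a) v` over `H`; in particular it is `H`-invariant. -/
theorem stmt10 {G V : Type*} [Group G] [AddCommGroup V] [Module ℂ V]
    (π : Representation ℂ G V)
    (H Up Mm Um : Subgroup G) [Fintype ↥H] [Fintype ↥Up] [Fintype ↥Mm] [Fintype ↥Um]
    (hUp : Up ≤ H) (hMm : Mm ≤ H) (hUm : Um ≤ H)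
    (hcard : Fintype.card ↥H = Fintype.card ↥Up * Fintype.card ↥Mm * Fintype.card ↥Um)
    (hfact : ∀ h : G, h ∈ H →
      ∃! t : ↥Up × ↥Mm × ↥Um, (t.1 : G) * (t.2.1 : G) * (t.2.2 : G) = h)
    (v : V) (hv : ∀ h ∈ H, π h v = v)
    (a : G)
    (haUp : ∀ u ∈ Up, a⁻¹ * u * a ∈ Up)
    (haMm : ∀ m : G, m ∈ Mm ↔ a⁻¹ * m * a ∈ Mm)
    (haUm : ∀ u ∈ Um, a * u * a⁻¹ ∈ Um) :
    ((Fintype.card ↥Up : ℂ))⁻¹ • ∑ u : ↥Up, π ((u : G) * a) v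
        = ((Fintype.card ↥H : ℂ))⁻¹ • ∑ h : ↥H, π ((h : G) * a) v ∧
    ∀ h ∈ H, π h (((Fintype.card ↥Up : ℂ))⁻¹ • ∑ u : ↥Up, π ((u : G) * a) v)
        = ((Fintype.card ↥Up : ℂ))⁻¹ • ∑ u : ↥Up, π ((u : G) * a) v := by
  classical
  -- For any g with a⁻¹ g a ∈ H, π (g * a) v = π a v
  have key : ∀ g : G, a⁻¹ * g * a ∈ H → π (g * a) v = π a v := by
    intro g hg
    have h1 : g * a = a * (a⁻¹ * g * a) := by group
    rw [h1, map_mul, Module.End.mul_apply, hv _ hg]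
  -- a⁻¹ Um a ⊆ Um (by finiteness, a Um a⁻¹ = Um)
  have hUm' : ∀ u ∈ Um, a⁻¹ * u * a ∈ Um := by
    intro u hu
    have hinj : Function.Injective
        (fun x : ↥Um => (⟨a * (x : G) * a⁻¹, haUm x x.2⟩ : ↥Um)) := by
      intro x y hxy
      have h2 : a * (x : G) * a⁻¹ = a * (y : G) * a⁻¹ := congrArg Subtype.val hxy
      have : (x : G) = (y : G) := by
        have := mul_right_cancel h2
        exact mul_left_cancel this
      exact Subtype.ext this
    have hsurj := Finite.surjective_of_injective hinj
    obtain ⟨x, hx⟩ := hsurj ⟨u, hu⟩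
    have h3 : a * (x : G) * a⁻¹ = u := congrArg Subtype.val hx
    have h4 : a⁻¹ * u * a = (x : G) := by rw [← h3]; group
    rw [h4]; exact x.2
  -- the key vanishing of the M and U⁻ parts
  have hterm : ∀ t : ↥Up × ↥Mm × ↥Um,
      π ((t.1 : G) * (t.2.1 : G) * (t.2.2 : G) * a) v = π ((t.1 : G) * a) v := by
    rintro ⟨u, m, w⟩
    have hmw : a⁻¹ * ((m : G) * (w : G)) * a ∈ H := by
      have h5 : a⁻¹ * ((m : G) * (w : G)) * a
          = (a⁻¹ * (m : G) * a) * (a⁻¹ * (w : G) * a) := by group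
      rw [h5]
      exact mul_mem (hMm ((haMm m).1 m.2)) (hUm (hUm' w w.2))
    have h6 : (u : G) * (m : G) * (w : G) * a
        = (u : G) * (((m : G) * (w : G)) * a) := by group
    rw [h6, map_mul, Module.End.mul_apply, key _ hmw, ← Module.End.mul_apply, ← map_mul]
  -- the factorization equivalence Up × Mm × Um ≃ H
  have hmemH : ∀ t : ↥Up × ↥Mm × ↥Um, (t.1 : G) * (t.2.1 : G) * (t.2.2 : G) ∈ H :=
    fun t => mul_mem (mul_mem (hUp t.1.2) (hMm t.2.1.2)) (hUm t.2.2.2)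
  have hbij : Function.Bijective
      (fun t : ↥Up × ↥Mm × ↥Um => (⟨(t.1 : G) * (t.2.1 : G) * (t.2.2 : G), hmemH t⟩ : ↥H)) := by
    constructor
    · intro t t' htt'
      have h7 : (t.1 : G) * (t.2.1 : G) * (t.2.2 : G)
          = (t'.1 : G) * (t'.2.1 : G) * (t'.2.2 : G) := congrArg Subtype.val htt'
      obtain ⟨t0, -, huniq⟩ := hfact _ (hmemH t')
      exact (huniq t h7).trans (huniq t' rfl).symm
    · intro h
      obtain ⟨t, ht, -⟩ := hfact (h : G) h.2
      exact ⟨t, Subtype.ext ht⟩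
  set e : (↥Up × ↥Mm × ↥Um) ≃ ↥H := Equiv.ofBijective _ hbij with he
  -- rewrite the H-sum
  have hsum : ∑ h : ↥H, π ((h : G) * a) v
      = (Fintype.card ↥Mm * Fintype.card ↥Um) • ∑ u : ↥Up, π ((u : G) * a) v := by
    rw [← Fintype.sum_equiv e (fun t => π (((e t : ↥H) : G) * a) v)
        (fun h => π ((h : G) * a) v) (fun t => rfl)]
    have h8 : ∀ t : ↥Up × ↥Mm × ↥Um,
        π (((e t : ↥H) : G) * a) v = π ((t.1 : G) * a) v := fun t => hterm t
    rw [Fintype.sum_congr _ _ h8, Fintype.sum_prod_type]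
    simp [Finset.sum_const, mul_comm, Finset.card_univ, mul_smul, Finset.smul_sum]
  have hUpne : (Fintype.card ↥Up : ℂ) ≠ 0 := by
    exact_mod_cast (Nat.cast_ne_zero (R := ℂ)).mpr Fintype.card_ne_zero
  have hMmne : (Fintype.card ↥Mm : ℂ) ≠ 0 := by
    exact_mod_cast (Nat.cast_ne_zero (R := ℂ)).mpr Fintype.card_ne_zero
  have hUmne : (Fintype.card ↥Um : ℂ) ≠ 0 := by
    exact_mod_cast (Nat.cast_ne_zero (R := ℂ)).mpr Fintype.card_ne_zero
  have hmain : ((Fintype.card ↥Up : ℂ))⁻¹ • ∑ u : ↥Up, π ((u : G) * a) v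
      = ((Fintype.card ↥H : ℂ))⁻¹ • ∑ h : ↥H, π ((h : G) * a) v := by
    rw [hsum, ← Nat.cast_smul_eq_nsmul ℂ, smul_smul, hcard]
    congr 1
    push_cast
    field_simp
  refine ⟨hmain, ?_⟩
  intro h hh
  rw [hmain, map_smul, map_sum]
  congr 1
  have h9 : ∀ h' : ↥H, π h (π ((h' : G) * a) v) = π ((h : G) * (h' : G) * a) v := by
    intro h'
    simp [map_mul, mul_assoc]
  rw [Fintype.sum_congr _ _ h9]
  exact Fintype.sum_equiv (Equiv.mulLeft (⟨h, hh⟩ : ↥H))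
    (fun h' => π ((h : G) * ((h' : ↥H) : G) * a) v)
    (fun h' => π (((h' : ↥H) : G) * a) v)
    (fun h' => by rw [Equiv.coe_mulLeft]; rfl)
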